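/- Fix q ≥ 3 and let f : L_q^n → [q] satisfy Dist(f, NONMANIP) ≥ ε. Then either P(f is 2-manipulable at X) ≥ 4ε/(n q⁷) for X uniform on L_q^n, or there exist distinct i,j ∈ [n] and pairs {a,b}, {c,d} ⊆ [q] with c ∉ {a,b}, such that Inf_i^{a,b;[a:b]}(f) ≥ 2ε/(n q⁷) and Inf_j^{c,d;[c:d]}(f) ≥ 2ε/(n q⁷). -/

import Mathlib

open Finset
open scoped Classical

/-- `Ranking q` is the set `L_q` of total orderings (permutations) of the `q` alternatives;
`x k` is the alternative ranked in position `k` (position `0` is the top). -/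
abbrev Ranking (q : ℕ) := Equiv.Perm (Fin q)

/-- A voting profile: one ranking for each of the `n` voters. -/
abbrev Profile (n q : ℕ) := Fin n → Ranking q

/-- Uniform probability of an event on a finite type. -/
noncomputable def prob {α : Type*} [Fintype α] (P : α → Prop) : ℝ :=
  ((Finset.univ.filter P).card : ℝ) / (Fintype.card α : ℝ)

/-- `Prefers x a b`: the ranking `x` ranks alternative `a` strictly above `b`. -/
def Prefers {q : ℕ} (x : Ranking q) (a b : Fin q) : Prop :=
  x.symm a < x.symm b

/-- `mu f a = P(f(X) = a)` for `X` uniform. -/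
noncomputable def mu {n q : ℕ} (f : Profile n q → Fin q) (a : Fin q) : ℝ :=
  prob (fun x : Profile n q => f x = a)

/-- Statistical distance between two social choice functions. -/
noncomputable def distF {n q : ℕ} (f g : Profile n q → Fin q) : ℝ :=
  prob (fun x : Profile n q => f x ≠ g x)

/-- `Inf_i^a(f) = P(f(X) = a, f(X^{(i)}) ≠ a)`, where `X^{(i)}` re-randomizes coordinate `i`. -/
noncomputable def infA {n q : ℕ} (f : Profile n q → Fin q) (i : Fin n) (a : Fin q) : ℝ :=
  prob (fun p : Profile n q × Ranking q =>
    f p.1 = a ∧ f (Function.update p.1 i p.2) ≠ a)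

/-- `Inf_i^{a,b}(f) = P(f(X) = a, f(X^{(i)}) = b)`. -/
noncomputable def infAB {n q : ℕ} (f : Profile n q → Fin q) (i : Fin n) (a b : Fin q) : ℝ :=
  prob (fun p : Profile n q × Ranking q =>
    f p.1 = a ∧ f (Function.update p.1 i p.2) = b)

/-- The adjacent transposition `[a:b]` applied to a ranking `x`: exchanges `a` and `b`
if they occupy adjacent positions in `x`, and does nothing otherwise. -/
noncomputable def adjTrans {q : ℕ} (a b : Fin q) (x : Ranking q) : Ranking q :=
  if ((x.symm a : ℕ) + 1 = (x.symm b : ℕ) ∨ (x.symm b : ℕ) + 1 = (x.symm a : ℕ))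
  then x * Equiv.swap (x.symm a) (x.symm b) else x

/-- `Inf_i^{a;z}(f)` for `z` the adjacent transposition `[c:d]`:
`(1/2)·P(f(X) = a, f([c:d]_i X) ≠ a)`. -/
noncomputable def infAz {n q : ℕ} (f : Profile n q → Fin q) (i : Fin n) (a c d : Fin q) : ℝ :=
  (1 / 2) * prob (fun x : Profile n q =>
    f x = a ∧ f (Function.update x i (adjTrans c d (x i))) ≠ a)

/-- `Inf_i^{a,b;[a:b]}(f) = (1/2)·P(f(X) = a, f([a:b]_i X) = b)`. -/
noncomputable def infABadj {n q : ℕ} (f : Profile n q → Fin q) (i : Fin n) (a b : Fin q) : ℝ :=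
  (1 / 2) * prob (fun x : Profile n q =>
    f x = a ∧ f (Function.update x i (adjTrans a b (x i))) = b)

/-- An edge of the refined graph on rankings: `y` is obtained from `x` by swapping the
alternatives in two adjacent positions. -/
def AdjStep {q : ℕ} (x y : Ranking q) : Prop :=
  ∃ (k : ℕ) (h : k + 1 < q),
    y = x * Equiv.swap ⟨k, Nat.lt_of_succ_lt h⟩ ⟨k + 1, h⟩

/-- `f` is manipulable at `x`. -/
def IsManip {n q : ℕ} (f : Profile n q → Fin q) (x : Profile n q) : Prop :=
  ∃ (i : Fin n) (y : Profile n q),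
    (∀ j, j ≠ i → y j = x j) ∧ Prefers (x i) (f y) (f x)

/-- `y` is obtained from `x` by permuting (at most) `r` adjacent alternatives, i.e. `y`
agrees with `x` outside a window of `r` consecutive positions. -/
def AdjBlockPerm {q : ℕ} (r : ℕ) (x y : Ranking q) : Prop :=
  ∃ s : ℕ, ∀ k : Fin q, ¬ (s ≤ (k : ℕ) ∧ (k : ℕ) < s + r) → y k = x k

/-- `x` is an `r`-manipulation point of `f`. -/
def IsRManip {n q : ℕ} (f : Profile n q → Fin q) (r : ℕ) (x : Profile n q) : Prop :=
  ∃ (i : Fin n) (y : Profile n q),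
    (∀ j, j ≠ i → y j = x j) ∧ AdjBlockPerm r (x i) (y i) ∧
      Prefers (x i) (f y) (f x)

/-- `g` depends on at most the `i`-th coordinate for some `i` (the class `DICT`). -/
def IsDictator {n q : ℕ} (g : Profile n q → Fin q) : Prop :=
  ∃ i : Fin n, ∀ x y : Profile n q, x i = y i → g x = g y

/-- `g` takes at most two values. -/
def TakesAtMostTwoValues {n q : ℕ} (g : Profile n q → Fin q) : Prop :=
  ∃ a b : Fin q, ∀ x, g x = a ∨ g x = b

/-- `f` is neutral: it commutes with every renaming `σ` of the alternatives. -/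
def Neutral {n q : ℕ} (f : Profile n q → Fin q) : Prop :=
  ∀ (σ : Ranking q) (x : Profile n q), f (fun k => σ * x k) = σ (f x)

/-- `Shifted c u w`: the ranking `w` equals `u` except that the position of the single
alternative `c` may have been shifted arbitrarily (all other alternatives keep their
relative order). -/
def Shifted {q : ℕ} (c : Fin q) (u w : Ranking q) : Prop :=
  ∀ e e' : Fin q, e ≠ c → e' ≠ c → (Prefers u e e' ↔ Prefers w e e')

/-!
Let `M` be the probability of a `2`-manipulation point. Changing the ranking of one voter to a
uniform one amounts to at most `q²` adjacent transpositions (bubble sort), and resampling a set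
of voters is a sequence of such one-voter changes. Hence, for an irreflexive cotransitive
relation `ρ` between outcomes, the probability that resampling moves the outcome along `ρ` is at
most `q²` times the total probability that a single adjacent transposition does. An adjacent
transposition that changes the outcome from `a` to `b` either exchanges `a` and `b` themselves,
which is what `Inf^{a,b;[a:b]}` counts, or keeps their order, and then one of its two ends is a
`2`-manipulation point; this costs at most `2M` per transposition.

Since `f` is `ε`-far from two-valued functions, three alternatives `e` have
`ε/q ≤ P(f = e) ≤ 1 - ε`, and the bound with `ρ u v := u = e ∧ v ≠ e` gives each of them a
large refined boundary `Inf_i^{e,β;[e:β]}`. If the second alternative of the theorem fails,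
these three boundaries sit at a single voter `i` and no other voter has a large refined
boundary; the bound with `ρ := (≠)`, resampling every voter but `i`, then makes `f` `ε`-close
to a function of `x i` alone, a dictator.
-/

section Prob

variable {α β : Type*} [Fintype α] [Fintype β]

lemma prob_eq_card_div (P : α → Prop) [DecidablePred P] :
    prob P = (#(univ.filter P) : ℝ) / Fintype.card α := by
  unfold prob
  congr

lemma prob_nonneg (P : α → Prop) : 0 ≤ prob P := by
  unfold prob
  positivity

lemma prob_congr {P Q : α → Prop} (h : ∀ a, P a ↔ Q a) : prob P = prob Q := by
  rw [show P = Q from funext fun a => propext (h a)]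

lemma prob_mono {P Q : α → Prop} (h : ∀ a, P a → Q a) : prob P ≤ prob Q := by
  unfold prob
  gcongr with a
  exact h a

lemma prob_le_sum {ι : Type*} (s : Finset ι) {P : α → Prop} {Q : ι → α → Prop}
    (h : ∀ a, P a → ∃ i ∈ s, Q i a) :
    prob P ≤ ∑ i ∈ s, prob (Q i) := by
  simp only [prob, ← Finset.sum_div]
  gcongr
  calc (#(univ.filter P) : ℝ) ≤ #(s.biUnion fun i => univ.filter (Q i)) := by
        gcongr
        intro a ha
        obtain ⟨i, hi, hQ⟩ := h a (Finset.mem_filter.mp ha).2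
        exact Finset.mem_biUnion.mpr ⟨i, hi, by simpa using hQ⟩
    _ ≤ _ := by exact_mod_cast Finset.card_biUnion_le

lemma prob_or_le (P Q : α → Prop) : prob (fun a => P a ∨ Q a) ≤ prob P + prob Q := by
  simpa [Fin.sum_univ_two] using
    prob_le_sum (univ : Finset (Fin 2)) (P := fun a => P a ∨ Q a) (Q := ![P, Q])
      (fun a h => h.elim (fun h => ⟨0, by simpa⟩) (fun h => ⟨1, by simpa⟩))

lemma sum_prob_le_of_disjoint {ι : Type*} (s : Finset ι) {P : α → Prop} {Q : ι → α → Prop}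
    (hQP : ∀ i ∈ s, ∀ a, Q i a → P a)
    (hdisj : ∀ i ∈ s, ∀ j ∈ s, ∀ a, Q i a → Q j a → i = j) :
    ∑ i ∈ s, prob (Q i) ≤ prob P := by
  simp only [prob, ← Finset.sum_div]
  gcongr
  rw [← Nat.cast_sum, ← Finset.card_biUnion]
  · gcongr
    intro a ha
    obtain ⟨i, hi, ha⟩ := Finset.mem_biUnion.mp ha
    simpa using hQP i hi a (Finset.mem_filter.mp ha).2
  · intro i hi j hj hij
    simp only [Function.onFun, Finset.disjoint_left, Finset.mem_filter, Finset.mem_univ,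
      true_and]
    exact fun a hai haj => hij (hdisj i hi j hj a hai haj)

lemma prob_comp_equiv (σ : α ≃ α) (P : α → Prop) : prob (fun a => P (σ a)) = prob P := by
  unfold prob
  congr 2
  exact_mod_cast Finset.card_equiv σ (by simp)

lemma prob_not [Nonempty α] (P : α → Prop) : prob (fun a => ¬ P a) = 1 - prob P := by
  rw [prob_eq_card_div, prob_eq_card_div, Finset.filter_not,
    Finset.card_sdiff_of_subset (Finset.filter_subset _ _), Finset.card_univ,
    Nat.cast_sub (Finset.card_le_univ _), sub_div, div_self (by positivity)]

lemma prob_fst_and_snd (P : α → Prop) (Q : β → Prop) :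
    prob (fun p : α × β => P p.1 ∧ Q p.2) = prob P * prob Q := by
  rw [prob_eq_card_div, prob_eq_card_div, prob_eq_card_div, ← Finset.univ_product_univ,
    Finset.filter_product, Finset.card_product, Fintype.card_prod]
  push_cast
  rw [div_mul_div_comm]

lemma prob_prod_eq_sum_div (P : α × β → Prop) :
    prob P = (∑ b, prob fun a => P (a, b)) / Fintype.card β := by
  simp only [prob, ← Finset.sum_div, div_div, Fintype.card_prod]
  congr 1
  · rw [← Nat.cast_sum]
    simp only [Finset.card_filter, Fintype.sum_prod_type_right]
  · push_cast; ring

end Prob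

section AdjSwap

variable {q : ℕ}

/-- `adjSwap q p` exchanges the positions `p` and `p + 1`; it is the identity if `q ≤ p + 1`. -/
noncomputable def adjSwap (q p : ℕ) : Ranking q :=
  if h : p + 1 < q then Equiv.swap ⟨p, by omega⟩ ⟨p + 1, h⟩ else 1

@[simp]
lemma adjSwap_mul_self (p : ℕ) : adjSwap q p * adjSwap q p = 1 := by
  unfold adjSwap
  split_ifs <;> simp

@[simp]
lemma adjSwap_adjSwap (p : ℕ) (k : Fin q) : adjSwap q p (adjSwap q p k) = k := by
  rw [← Equiv.Perm.mul_apply, adjSwap_mul_self, Equiv.Perm.one_apply]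

lemma adjSwap_val (p : ℕ) (hp : p + 1 < q) (k : Fin q) :
    (adjSwap q p k : ℕ) = if (k : ℕ) = p then p + 1 else if (k : ℕ) = p + 1 then p else k := by
  unfold adjSwap
  rw [dif_pos hp, Equiv.swap_apply_def]
  split_ifs <;> simp_all [Fin.ext_iff]

lemma adjSwap_apply_of_ne (p : ℕ) {k : Fin q} (h₁ : (k : ℕ) ≠ p) (h₂ : (k : ℕ) ≠ p + 1) :
    adjSwap q p k = k := by
  by_cases hp : p + 1 < q
  · exact Fin.ext (by rw [adjSwap_val p hp]; simp [h₁, h₂])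
  · simp [adjSwap, hp]

noncomputable def inversions (σ : Ranking q) : Finset (Fin q × Fin q) :=
  univ.filter fun kl => kl.1 < kl.2 ∧ σ kl.2 < σ kl.1

lemma mem_inversions {σ : Ranking q} {kl : Fin q × Fin q} :
    kl ∈ inversions σ ↔ kl.1 < kl.2 ∧ σ kl.2 < σ kl.1 := by
  simp [inversions]

lemma eq_one_of_forall_adj_lt {σ : Ranking q}
    (h : ∀ p (hp : p + 1 < q), σ ⟨p, by omega⟩ < σ ⟨p + 1, hp⟩) : σ = 1 := by
  obtain _ | q := q
  · exact Subsingleton.elim _ _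
  have hmono : StrictMono σ := Fin.strictMono_iff_lt_succ.mpr fun i => h i (by omega)
  have := Subsingleton.elim (StrictMono.orderIsoOfSurjective σ hmono σ.surjective)
    (OrderIso.refl _)
  ext k
  exact congrArg (fun e : Fin (q + 1) ≃o Fin (q + 1) => (e k : ℕ)) this

lemma card_inversions_mul_adjSwap_lt {σ : Ranking q} {p : ℕ} (hp : p + 1 < q)
    (hdesc : σ ⟨p + 1, hp⟩ < σ ⟨p, by omega⟩) :
    #(inversions (σ * adjSwap q p)) < #(inversions σ) := by
  set P : Fin q × Fin q := (⟨p, by omega⟩, ⟨p + 1, hp⟩)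
  have hP : P ∈ inversions σ := mem_inversions.mpr ⟨Fin.mk_lt_mk.mpr (by omega), hdesc⟩
  -- composing with the swap permutes the inversions, except for the one at `(p, p + 1)`
  have hmaps : ∀ kl ∈ inversions (σ * adjSwap q p),
      (adjSwap q p kl.1, adjSwap q p kl.2) ∈ (inversions σ).erase P := by
    rintro ⟨k, l⟩ hkl
    simp only [mem_inversions, Equiv.Perm.mul_apply] at hkl
    have hkl' : ¬ ((k : ℕ) = p ∧ (l : ℕ) = p + 1) := by
      rintro ⟨hk, hl⟩
      obtain rfl : k = P.1 := Fin.ext hk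
      obtain rfl : l = P.2 := Fin.ext hl
      have h₁ : adjSwap q p P.1 = P.2 := Fin.ext (by rw [adjSwap_val p hp]; simp [P])
      have h₂ : adjSwap q p P.2 = P.1 := Fin.ext (by rw [adjSwap_val p hp]; simp [P])
      rw [h₁, h₂] at hkl
      exact lt_asymm hkl.2 hdesc
    rw [Finset.mem_erase, mem_inversions]
    simp only [ne_eq, Prod.ext_iff, Fin.ext_iff, Fin.lt_def, adjSwap_val p hp, P]
    rw [Fin.lt_def] at hkl
    refine ⟨?_, ?_, hkl.2⟩ <;> split_ifs <;> omega
  have hinj : Set.InjOn (fun kl : Fin q × Fin q => (adjSwap q p kl.1, adjSwap q p kl.2))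
      (inversions (σ * adjSwap q p)) := by
    rintro ⟨k, l⟩ - ⟨k', l'⟩ - h
    simp only [Prod.mk.injEq] at h
    exact Prod.ext ((adjSwap q p).injective h.1) ((adjSwap q p).injective h.2)
  calc #(inversions (σ * adjSwap q p)) ≤ #((inversions σ).erase P) :=
        Finset.card_le_card_of_injOn _ hmaps hinj
    _ < #(inversions σ) := Finset.card_erase_lt_of_mem hP

lemma exists_adj_descent_of_ne_one {σ : Ranking q} (h : σ ≠ 1) :
    ∃ p, ∃ hp : p + 1 < q, σ ⟨p + 1, hp⟩ < σ ⟨p, by omega⟩ := by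
  by_contra! hasc
  exact h (eq_one_of_forall_adj_lt fun p hp =>
    (hasc p hp).lt_of_ne (σ.injective.ne (by simp [Fin.ext_iff])))

lemma exists_adjSwap_word (σ : Ranking q) :
    ∃ l : List ℕ, l.length ≤ #(inversions σ) ∧ (∀ p ∈ l, p + 1 < q) ∧
      (l.map (adjSwap q)).prod = σ := by
  induction hm : #(inversions σ) using Nat.strong_induction_on generalizing σ with
  | _ m ih =>
    by_cases h1 : σ = 1
    · exact ⟨[], by simp, by simp, by simp [h1]⟩
    obtain ⟨p, hp, hdesc⟩ := exists_adj_descent_of_ne_one h1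
    have hlt := card_inversions_mul_adjSwap_lt hp hdesc
    obtain ⟨l, hlen, hl, hprod⟩ := ih _ (hm ▸ hlt) (σ * adjSwap q p) rfl
    refine ⟨l ++ [p], by simp; omega, by simpa [or_imp, forall_and] using ⟨hl, hp⟩, ?_⟩
    simp [hprod, mul_assoc]

end AdjSwap

section Resampling

variable {n q : ℕ} (f : Profile n q → Fin q) {ρ : Fin q → Fin q → Prop}

/-- Right multiplication acts on positions: voter `j` rearranges its ranking by `τ`. -/
noncomputable def mulRightAt (j : Fin n) (τ : Ranking q) : Profile n q ≃ Profile n q where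
  toFun x := Function.update x j (x j * τ)
  invFun x := Function.update x j (x j * τ⁻¹)
  left_inv x := by simp
  right_inv x := by simp

lemma mulRightAt_apply (j : Fin n) (τ : Ranking q) (x : Profile n q) :
    mulRightAt j τ x = Function.update x j (x j * τ) := rfl

lemma mulRightAt_mul (j : Fin n) (τ σ : Ranking q) (x : Profile n q) :
    mulRightAt j (τ * σ) x = mulRightAt j σ (mulRightAt j τ x) := by
  simp [mulRightAt_apply, mul_assoc]

variable (ρ) in
noncomputable def boundaryProb (j : Fin n) (τ : Ranking q) : ℝ :=
  prob fun x : Profile n q => ρ (f x) (f (mulRightAt j τ x))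

lemma boundaryProb_one (hirr : ∀ a, ¬ ρ a a) (j : Fin n) : boundaryProb f ρ j 1 = 0 := by
  simp [boundaryProb, mulRightAt_apply, hirr, prob]

lemma boundaryProb_mul_le (hcotrans : ∀ a b c, ρ a c → ρ a b ∨ ρ b c) (j : Fin n)
    (τ σ : Ranking q) :
    boundaryProb f ρ j (τ * σ) ≤ boundaryProb f ρ j τ + boundaryProb f ρ j σ := by
  calc boundaryProb f ρ j (τ * σ)
      ≤ prob fun x => ρ (f x) (f (mulRightAt j τ x)) ∨
          ρ (f (mulRightAt j τ x)) (f (mulRightAt j σ (mulRightAt j τ x))) :=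
        prob_mono fun x hx => hcotrans _ _ _ (by rwa [← mulRightAt_mul])
    _ ≤ _ := (prob_or_le _ _).trans_eq <| by
        rw [boundaryProb, boundaryProb, prob_comp_equiv (mulRightAt j τ)
          (fun x => ρ (f x) (f (mulRightAt j σ x)))]

lemma boundaryProb_list_prod_le (hirr : ∀ a, ¬ ρ a a)
    (hcotrans : ∀ a b c, ρ a c → ρ a b ∨ ρ b c) (j : Fin n) (l : List (Ranking q)) :
    boundaryProb f ρ j l.prod ≤ (l.map (boundaryProb f ρ j)).sum := by
  induction l with
  | nil => simp [boundaryProb_one f hirr]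
  | cons τ l ih =>
    simpa using (boundaryProb_mul_le f hcotrans j τ l.prod).trans (by gcongr)

lemma boundaryProb_le_sum_adjSwap (hirr : ∀ a, ¬ ρ a a)
    (hcotrans : ∀ a b c, ρ a c → ρ a b ∨ ρ b c) (j : Fin n) (τ : Ranking q) :
    boundaryProb f ρ j τ ≤ q * q * ∑ p ∈ range (q - 1), boundaryProb f ρ j (adjSwap q p) := by
  obtain ⟨l, hlen, hl, rfl⟩ := exists_adjSwap_word τ
  replace hlen : l.length ≤ q * q := hlen.trans ((Finset.card_le_univ _).trans (by simp))
  have hterm : ∀ p ∈ l, boundaryProb f ρ j (adjSwap q p) ≤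
      ∑ p ∈ range (q - 1), boundaryProb f ρ j (adjSwap q p) := fun p hp =>
    Finset.single_le_sum (f := fun p => boundaryProb f ρ j (adjSwap q p))
      (fun _ _ => prob_nonneg _) (Finset.mem_range.mpr (by have := hl p hp; omega))
  calc boundaryProb f ρ j (l.map (adjSwap q)).prod
      ≤ (l.map fun p => boundaryProb f ρ j (adjSwap q p)).sum := by
        simpa [Function.comp_def] using
          boundaryProb_list_prod_le f hirr hcotrans j (l.map (adjSwap q))
    _ ≤ l.length * ∑ p ∈ range (q - 1), boundaryProb f ρ j (adjSwap q p) := by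
        simpa using List.sum_le_card_nsmul (l.map fun p => boundaryProb f ρ j (adjSwap q p)) _
          (by simpa using hterm)
    _ ≤ q * q * ∑ p ∈ range (q - 1), boundaryProb f ρ j (adjSwap q p) := by
        gcongr
        · exact Finset.sum_nonneg fun _ _ => prob_nonneg _
        · exact_mod_cast hlen

lemma prob_rel_update_le (hirr : ∀ a, ¬ ρ a a) (hcotrans : ∀ a b c, ρ a c → ρ a b ∨ ρ b c)
    (j : Fin n) :
    prob (fun xy : Profile n q × Profile n q =>
        ρ (f xy.1) (f (Function.update xy.1 j (xy.2 j))))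
      ≤ q * q * ∑ p ∈ range (q - 1), boundaryProb f ρ j (adjSwap q p) := by
  -- the change of variables `y j ↦ x j * y j` preserves the uniform measure
  let E : Profile n q × Profile n q ≃ Profile n q × Profile n q :=
    { toFun := fun xy => (xy.1, Function.update xy.2 j (xy.1 j * xy.2 j))
      invFun := fun xy => (xy.1, Function.update xy.2 j ((xy.1 j)⁻¹ * xy.2 j))
      left_inv := fun xy => by simp
      right_inv := fun xy => by simp }
  rw [← prob_comp_equiv E, prob_prod_eq_sum_div, div_le_iff₀ (by positivity)]
  calc ∑ y : Profile n q, prob (fun x => ρ (f (E (x, y)).1)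
          (f (Function.update (E (x, y)).1 j ((E (x, y)).2 j))))
      = ∑ y : Profile n q, boundaryProb f ρ j (y j) := by
        simp [E, boundaryProb, mulRightAt_apply]
    _ ≤ ∑ _y : Profile n q, q * q * ∑ p ∈ range (q - 1), boundaryProb f ρ j (adjSwap q p) :=
        Finset.sum_le_sum fun y _ => boundaryProb_le_sum_adjSwap f hirr hcotrans j _
    _ = _ := by simp [mul_comm]

def resample (A : Finset (Fin n)) (x y : Profile n q) : Profile n q :=
  fun k => if k ∈ A then y k else x k

@[simp]
lemma resample_empty (x y : Profile n q) : resample ∅ x y = x := by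
  ext1 k
  simp [resample]

@[simp]
lemma resample_univ (x y : Profile n q) : resample univ x y = y := by
  ext1 k
  simp [resample]

lemma resample_insert (A : Finset (Fin n)) (j : Fin n) (x y : Profile n q) :
    resample (insert j A) x y = Function.update (resample A x y) j (y j) := by
  ext1 k
  by_cases hk : k = j <;> simp [resample, hk]

noncomputable def resampleSwap (A : Finset (Fin n)) :
    Profile n q × Profile n q ≃ Profile n q × Profile n q :=
  Function.Involutive.toPerm (fun xy => (resample A xy.1 xy.2, resample A xy.2 xy.1))
    fun xy => by ext1 <;> ext1 k <;> by_cases hk : k ∈ A <;> simp [resample, hk]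

lemma resampleSwap_apply (A : Finset (Fin n)) (xy : Profile n q × Profile n q) :
    resampleSwap A xy = (resample A xy.1 xy.2, resample A xy.2 xy.1) := rfl

/-- The hybrid argument: resample the voters of `A` one at a time. -/
lemma prob_rel_resample_le (hirr : ∀ a, ¬ ρ a a) (hcotrans : ∀ a b c, ρ a c → ρ a b ∨ ρ b c)
    (A : Finset (Fin n)) :
    prob (fun xy : Profile n q × Profile n q => ρ (f xy.1) (f (resample A xy.1 xy.2)))
      ≤ q * q * ∑ j ∈ A, ∑ p ∈ range (q - 1), boundaryProb f ρ j (adjSwap q p) := by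
  induction A using Finset.induction_on with
  | empty => simp [hirr, prob]
  | insert j A hj ih =>
    calc prob (fun xy : Profile n q × Profile n q =>
          ρ (f xy.1) (f (resample (insert j A) xy.1 xy.2)))
        ≤ prob (fun xy : Profile n q × Profile n q =>
            ρ (f xy.1) (f (resample A xy.1 xy.2)) ∨
              ρ (f (resampleSwap A xy).1)
                (f (Function.update (resampleSwap A xy).1 j ((resampleSwap A xy).2 j)))) := by
          refine prob_mono fun xy h => hcotrans _ _ _ ?_
          simpa [resampleSwap_apply, ← resample_insert, resample, hj] using h
      _ ≤ _ := (prob_or_le _ _).trans <| by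
          rw [prob_comp_equiv (resampleSwap A) (fun xy : Profile n q × Profile n q =>
            ρ (f xy.1) (f (Function.update xy.1 j (xy.2 j)))), Finset.sum_insert hj, mul_add]
          linarith [prob_rel_update_le f hirr hcotrans j]

end Resampling

section RefinedBoundary

variable {n q : ℕ} (f : Profile n q → Fin q) {ρ : Fin q → Fin q → Prop}

/-- The event of `infABadj f j a b`, split according to the position `p` of the exchanged pair. -/
def IsAdjBoundary (j : Fin n) (p : ℕ) (a b : Fin q) (x : Profile n q) : Prop :=
  f x = a ∧ f (mulRightAt j (adjSwap q p) x) = b ∧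
    (((x j).symm a : ℕ) = p ∧ ((x j).symm b : ℕ) = p + 1 ∨
      ((x j).symm b : ℕ) = p ∧ ((x j).symm a : ℕ) = p + 1)

lemma isRManip_of_prefers {j : Fin n} {p : ℕ} {x : Profile n q}
    (h : Prefers (x j) (f (mulRightAt j (adjSwap q p) x)) (f x)) : IsRManip f 2 x := by
  refine ⟨j, mulRightAt j (adjSwap q p) x, fun k hk => Function.update_of_ne hk _ _,
    ⟨p, fun k hk => ?_⟩, h⟩
  rw [mulRightAt_apply, Function.update_self, Equiv.Perm.mul_apply,
    adjSwap_apply_of_ne p (by omega) (by omega)]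

/-- An adjacent swap that does not exchange the two outcomes keeps their relative order, so
voter `j` gains by the swap at one of its two ends. -/
lemma isRManip_or_isAdjBoundary (j : Fin n) (p : ℕ) (x : Profile n q)
    (hne : f x ≠ f (mulRightAt j (adjSwap q p) x)) :
    IsRManip f 2 x ∨ IsRManip f 2 (mulRightAt j (adjSwap q p) x) ∨
      IsAdjBoundary f j p (f x) (f (mulRightAt j (adjSwap q p) x)) x := by
  set x' := mulRightAt j (adjSwap q p) x
  have hp : p + 1 < q := by
    by_contra hp
    exact hne (by simp [x', mulRightAt_apply, adjSwap, hp])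
  have hpos : ∀ c, ((x' j).symm c : ℕ) = adjSwap q p ((x j).symm c) := fun c =>
    congrArg Fin.val ((Equiv.symm_apply_eq _).mpr (by simp [x', mulRightAt_apply]))
  have hback : mulRightAt j (adjSwap q p) x' = x := by
    rw [← mulRightAt_mul, adjSwap_mul_self]
    simp [mulRightAt_apply]
  set A : ℕ := ((x j).symm (f x) : ℕ)
  set B : ℕ := ((x j).symm (f x') : ℕ)
  have hAB : A ≠ B := fun h => hne ((x j).symm.injective (Fin.ext h))
  by_cases hswap : A = p ∧ B = p + 1 ∨ B = p ∧ A = p + 1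
  · exact Or.inr (Or.inr ⟨rfl, rfl, hswap⟩)
  have horder : A < B ↔ ((x' j).symm (f x) : ℕ) < (x' j).symm (f x') := by
    rw [hpos, hpos, adjSwap_val p hp, adjSwap_val p hp]
    split_ifs <;> omega
  rcases hAB.lt_or_gt with hlt | hgt
  · exact Or.inr (Or.inl (isRManip_of_prefers f (by rw [hback]; exact horder.mp hlt)))
  · exact Or.inl (isRManip_of_prefers f hgt)

lemma adjTrans_eq_of_isAdjBoundary {j : Fin n} {p : ℕ} {a b : Fin q} {x : Profile n q}
    (h : IsAdjBoundary f j p a b x) : adjTrans a b (x j) = x j * adjSwap q p := by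
  obtain ⟨-, -, hpos⟩ := h
  have hp : p + 1 < q := by
    rcases hpos with ⟨-, h⟩ | ⟨-, h⟩ <;> omega
  rw [adjTrans, if_pos (by omega), adjSwap, dif_pos hp]
  rcases hpos with ⟨ha, hb⟩ | ⟨hb, ha⟩
  · rw [show (x j).symm a = ⟨p, by omega⟩ from Fin.ext ha,
      show (x j).symm b = ⟨p + 1, hp⟩ from Fin.ext hb]
  · rw [show (x j).symm a = ⟨p + 1, hp⟩ from Fin.ext ha,
      show (x j).symm b = ⟨p, by omega⟩ from Fin.ext hb, Equiv.swap_comm]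

/-- A profile is an adjacent boundary for at most one position `p`. -/
lemma sum_prob_isAdjBoundary_le (j : Fin n) (a b : Fin q) :
    ∑ p ∈ range (q - 1), prob (IsAdjBoundary f j p a b) ≤ 2 * infABadj f j a b := by
  rw [infABadj, ← mul_assoc, show (2 : ℝ) * (1 / 2) = 1 by norm_num, one_mul]
  refine sum_prob_le_of_disjoint _ (fun p _ x hx => ?_) fun p _ p' _ x hx hx' => ?_
  · rw [adjTrans_eq_of_isAdjBoundary f hx]
    exact ⟨hx.1, hx.2.1⟩
  · obtain ⟨-, -, h⟩ := hx
    obtain ⟨-, -, h'⟩ := hx'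
    omega

lemma boundaryProb_adjSwap_le (hirr : ∀ a, ¬ ρ a a)
    {S : Finset (Fin q × Fin q)} (hS : ∀ a b, ρ a b → (a, b) ∈ S) (j : Fin n) (p : ℕ) :
    boundaryProb f ρ j (adjSwap q p) ≤ 2 * prob (IsRManip f 2) +
      ∑ ab ∈ S, prob (IsAdjBoundary f j p ab.1 ab.2) := by
  calc boundaryProb f ρ j (adjSwap q p)
      ≤ prob fun x => (IsRManip f 2 x ∨ IsRManip f 2 (mulRightAt j (adjSwap q p) x)) ∨
          ∃ ab ∈ S, IsAdjBoundary f j p ab.1 ab.2 x := by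
        refine prob_mono fun x hx => ?_
        rcases isRManip_or_isAdjBoundary f j p x (fun h => hirr _ (h ▸ hx)) with h | h | h
        · exact Or.inl (Or.inl h)
        · exact Or.inl (Or.inr h)
        · exact Or.inr ⟨_, hS _ _ hx, h⟩
    _ ≤ prob (IsRManip f 2) + prob (fun x => IsRManip f 2 (mulRightAt j (adjSwap q p) x)) +
          ∑ ab ∈ S, prob (IsAdjBoundary f j p ab.1 ab.2) :=
        (prob_or_le _ _).trans (add_le_add (prob_or_le _ _) (prob_le_sum _ fun _ h => h))
    _ = _ := by rw [prob_comp_equiv]; ring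

lemma sum_boundaryProb_adjSwap_le (hirr : ∀ a, ¬ ρ a a) {S : Finset (Fin q × Fin q)}
    (hS : ∀ a b, ρ a b → (a, b) ∈ S) (j : Fin n) :
    ∑ p ∈ range (q - 1), boundaryProb f ρ j (adjSwap q p) ≤ q * (2 * prob (IsRManip f 2)) +
      2 * ∑ ab ∈ S, infABadj f j ab.1 ab.2 := by
  calc ∑ p ∈ range (q - 1), boundaryProb f ρ j (adjSwap q p)
      ≤ ∑ p ∈ range (q - 1), (2 * prob (IsRManip f 2) +
          ∑ ab ∈ S, prob (IsAdjBoundary f j p ab.1 ab.2)) :=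
        Finset.sum_le_sum fun p _ => boundaryProb_adjSwap_le f hirr hS j p
    _ = (q - 1 : ℕ) * (2 * prob (IsRManip f 2)) +
          ∑ ab ∈ S, ∑ p ∈ range (q - 1), prob (IsAdjBoundary f j p ab.1 ab.2) := by
        rw [Finset.sum_add_distrib, Finset.sum_comm, Finset.sum_const, Finset.card_range,
          nsmul_eq_mul]
    _ ≤ _ := by
        rw [Finset.mul_sum]
        gcongr with ab
        · exact mul_nonneg zero_le_two (prob_nonneg _)
        · exact_mod_cast Nat.sub_le q 1
        · exact sum_prob_isAdjBoundary_le f j ab.1 ab.2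

lemma prob_rel_resample_le_of_infABadj_le (hirr : ∀ a, ¬ ρ a a)
    (hcotrans : ∀ a b c, ρ a c → ρ a b ∨ ρ b c) {S : Finset (Fin q × Fin q)}
    (hS : ∀ a b, ρ a b → (a, b) ∈ S) (A : Finset (Fin n)) {t : ℝ}
    (ht : ∀ j ∈ A, ∀ ab ∈ S, infABadj f j ab.1 ab.2 ≤ t) :
    prob (fun xy : Profile n q × Profile n q => ρ (f xy.1) (f (resample A xy.1 xy.2))) ≤
      q * q * (#A * (q * (2 * prob (IsRManip f 2)) + 2 * (#S * t))) := by
  refine (prob_rel_resample_le f hirr hcotrans A).trans ?_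
  gcongr
  simpa using Finset.sum_le_card_nsmul A _ _ fun j hj =>
    (sum_boundaryProb_adjSwap_le f hirr hS j).trans <| by
      gcongr
      simpa using Finset.sum_le_card_nsmul S _ t (ht j hj)

end RefinedBoundary

section NoCrossing

-- `H i a b` will say that voter `i` has a large refined boundary from `a` to `b`; `hH` is then
-- the failure of the second alternative of the theorem.
variable {ι α : Type*} {H : ι → α → α → Prop}

lemma eq_of_noCrossing (hH : ∀ i j a b c d, i ≠ j → H i a b → H j c d → c = a ∨ c = b)
    {a b c a' b' c' : α} (hab : a ≠ b) (hac : a ≠ c) (hbc : b ≠ c)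
    {i j k : ι} (ha : H i a a') (hb : H j b b') (hc : H k c c') : i = j := by
  by_contra hij
  have hba : b = a' := (hH i j a a' b b' hij ha hb).resolve_left hab.symm
  have hab' : a = b' := (hH j i b b' a a' (Ne.symm hij) hb ha).resolve_left hab
  by_cases hki : k = i
  · subst hki
    rcases hH j k b b' c c' (Ne.symm hij) hb hc with h | h
    · exact hbc h.symm
    · exact hac (hab'.trans h.symm)
  · rcases hH i k a a' c c' (Ne.symm hki) ha hc with h | h
    · exact hac h.symm
    · exact hbc (hba.trans h.symm)

lemma not_of_ne_of_noCrossing (hH : ∀ i j a b c d, i ≠ j → H i a b → H j c d → c = a ∨ c = b)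
    {a b c a' b' c' : α} (hab : a ≠ b) (hac : a ≠ c) (hbc : b ≠ c)
    {i j k : ι} (ha : H i a a') (hb : H j b b') (hc : H k c c') {l : ι} (hl : l ≠ i) (x y : α) :
    ¬ H l x y := by
  intro hxy
  obtain rfl := eq_of_noCrossing hH hab hac hbc ha hb hc
  obtain rfl := eq_of_noCrossing hH hac hab hbc.symm ha hc hb
  have := hH l i x y a a' hl hxy ha
  have := hH l i x y b b' hl hxy hb
  have := hH l i x y c c' hl hxy hc
  grind

end NoCrossing

lemma div_two_mul_le_mul_one_sub {Q ε m : ℝ} (hQ : 1 ≤ Q) (hε : 0 ≤ ε) (h₁ : ε / Q ≤ m)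
    (h₂ : ε ≤ 1 - m) : ε / (2 * Q) ≤ m * (1 - m) := by
  have hm : 0 ≤ m := (div_nonneg hε (by linarith)).trans h₁
  rcases le_total m (1 / 2) with h | h
  · calc ε / (2 * Q) = ε / Q * (1 / 2) := by field_simp
      _ ≤ m * (1 - m) := by gcongr; linarith
  · calc ε / (2 * Q) ≤ 1 / 2 * ε := by
          rw [div_le_iff₀ (by positivity)]
          nlinarith
      _ ≤ m * (1 - m) := by gcongr

section Distance

variable {n q : ℕ} {f : Profile n q → Fin q} {ε : ℝ}

lemma le_one_sub_mu (hdist : ∀ g, TakesAtMostTwoValues g → ε ≤ distF f g) (e : Fin q) :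
    ε ≤ 1 - mu f e := by
  simpa [distF, mu, prob_not] using hdist (fun _ => e) ⟨e, e, fun _ => Or.inl rfl⟩

lemma exists_mu_ge (hq : 3 ≤ q) (hε : 0 < ε)
    (hdist : ∀ g, TakesAtMostTwoValues g → ε ≤ distF f g) (a b : Fin q) :
    ∃ c, c ≠ a ∧ c ≠ b ∧ ε / q ≤ mu f c := by
  set S := univ.filter fun c : Fin q => c ≠ a ∧ c ≠ b
  have hS : S.Nonempty := by
    obtain ⟨c, -, hc⟩ := Finset.exists_mem_notMem_of_card_lt_card (s := {a, b}) (t := univ)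
      ((Finset.card_le_two).trans_lt (by simp; omega))
    exact ⟨c, by simpa [S, not_or] using hc⟩
  have hout : ε ≤ prob fun x => f x ≠ a ∧ f x ≠ b := by
    refine (hdist (fun x => if f x = a ∨ f x = b then f x else a)
      ⟨a, b, fun x => by dsimp only; split_ifs with h <;> simp_all⟩).trans_eq
      (prob_congr fun x => ?_)
    dsimp only
    split_ifs with h <;> tauto
  obtain ⟨c, hc, hmu⟩ := Finset.exists_le_of_sum_le hS (f := fun _ => ε / q) (g := mu f) <| by
    calc ∑ _c ∈ S, ε / q = #S * (ε / q) := by simp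
      _ ≤ q * (ε / q) := by gcongr; exact_mod_cast (Finset.card_le_univ S).trans (by simp)
      _ = ε := by field_simp
      _ ≤ ∑ c ∈ S, mu f c := hout.trans (prob_le_sum S fun x hx => ⟨f x, by simpa [S], rfl⟩)
  exact ⟨c, (Finset.mem_filter.mp hc).2.1, (Finset.mem_filter.mp hc).2.2, hmu⟩

lemma exists_infABadj_ge (hq : 3 ≤ q) (hn : 0 < n) (hε : 0 < ε)
    (hM : prob (IsRManip f 2) ≤ 4 * ε / (n * q ^ 7)) {e : Fin q} (h₁ : ε / q ≤ mu f e)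
    (h₂ : ε ≤ 1 - mu f e) :
    ∃ j β, e ≠ β ∧ 2 * ε / (n * q ^ 7) ≤ infABadj f j e β := by
  by_contra! hsmall
  set ρ : Fin q → Fin q → Prop := fun u v => u = e ∧ v ≠ e
  set S := (univ.erase e).image fun b => (e, b)
  have hbound := prob_rel_resample_le_of_infABadj_le f (ρ := ρ) (fun a h => h.2 h.1)
    (fun a b c h => by by_cases hb : b = e <;> simp_all [ρ])
    (S := S) (fun a b ⟨ha, hb⟩ => by simp [S, ha, hb]) univ (t := 2 * ε / (n * q ^ 7))
    fun j _ ab hab => by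
      obtain ⟨b, hb, rfl⟩ := Finset.mem_image.mp hab
      exact (hsmall j b (Finset.ne_of_mem_erase hb).symm).le
  have hlhs : prob (fun xy : Profile n q × Profile n q =>
      ρ (f xy.1) (f (resample univ xy.1 xy.2))) = mu f e * (1 - mu f e) := by
    simp only [ρ, resample_univ]
    rw [prob_fst_and_snd (fun x => f x = e) (fun y => f y ≠ e), prob_not, mu]
  have hS : #S ≤ q := Finset.card_image_le.trans ((Finset.card_erase_le).trans (by simp))
  have hQ : (3 : ℝ) ≤ q := by exact_mod_cast hq
  have h27 : (27 : ℝ) ≤ (q : ℝ) ^ 3 := by nlinarith [pow_le_pow_left₀ (by norm_num) hQ 3]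
  rw [hlhs, Finset.card_univ, Fintype.card_fin] at hbound
  have hlow := div_two_mul_le_mul_one_sub (by linarith) hε.le h₁ h₂
  refine (hlow.trans hbound).not_gt ?_
  calc _ ≤ (q : ℝ) * q * (n * (q * (2 * (4 * ε / (n * q ^ 7))) +
          2 * (q * (2 * ε / (n * q ^ 7))))) := by
        gcongr
    _ = 12 * ε / q ^ 4 := by field_simp; ring
    _ < ε / (2 * q) := by
        rw [div_lt_div_iff₀ (by positivity) (by positivity)]
        nlinarith [mul_le_mul_of_nonneg_left h27 (by positivity : (0 : ℝ) ≤ ε * q)]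

lemma exists_dictator_distF_lt (hq : 3 ≤ q) (hε : 0 < ε)
    (hM : prob (IsRManip f 2) ≤ 4 * ε / (n * q ^ 7)) (i₀ : Fin n)
    (hlight : ∀ j, j ≠ i₀ → ∀ a b, a ≠ b → infABadj f j a b ≤ 2 * ε / (n * q ^ 7)) :
    ∃ g, IsDictator g ∧ distF f g < ε := by
  set A := univ.erase i₀
  have hbound := prob_rel_resample_le_of_infABadj_le f (ρ := (· ≠ ·)) (fun a h => h rfl)
    (fun a b c h => by by_cases hb : a = b <;> simp_all) (S := univ.offDiag)
    (fun a b hab => by simpa using hab) A fun j hj ab hab =>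
      hlight j (Finset.ne_of_mem_erase hj) ab.1 ab.2 (Finset.mem_offDiag.mp hab).2.2
  have hM0 := prob_nonneg (IsRManip f 2)
  have hn : 0 < n := i₀.pos
  have hQ : (3 : ℝ) ≤ q := by exact_mod_cast hq
  have h27 : (27 : ℝ) ≤ (q : ℝ) ^ 3 := by nlinarith [pow_le_pow_left₀ (by norm_num) hQ 3]
  have hlt : prob (fun xy : Profile n q × Profile n q => f xy.1 ≠ f (resample A xy.1 xy.2))
      < ε := by
    refine hbound.trans_lt ?_
    calc _ ≤ (q : ℝ) * q * (n * (q * (2 * (4 * ε / (n * q ^ 7))) +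
            2 * (q * q * (2 * ε / (n * q ^ 7))))) := by
          gcongr
          · exact_mod_cast (Finset.card_le_univ A).trans (by simp)
          · exact_mod_cast (Finset.card_le_univ _).trans (by simp)
      _ = (8 / q + 4) * ε / q ^ 3 := by field_simp; ring
      _ < ε := by
          rw [div_lt_iff₀ (by positivity)]
          have : 8 / (q : ℝ) ≤ 8 / 3 := by gcongr
          nlinarith
  rw [prob_prod_eq_sum_div, div_lt_iff₀ (by positivity)] at hlt
  obtain ⟨y, -, hy⟩ := Finset.exists_lt_of_sum_lt <| hlt.trans_eq <|
    show ε * Fintype.card (Profile n q) = ∑ _y : Profile n q, ε by simp [mul_comm]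
  refine ⟨fun x => f (resample A x y), ⟨i₀, fun x x' h => congrArg f ?_⟩, hy⟩
  ext1 k
  by_cases hk : k = i₀ <;> simp [resample, A, hk, h]

end Distance

/-- if `q ≥ 3` and `Dist(f, NONMANIP) ≥ ε`, then either a random profile is a
`2`-manipulation point with probability at least `4ε/(nq⁷)`, or there are `i ≠ j` and pairs
`{a,b}`, `{c,d}` with `c ∉ {a,b}` such that
`Inf_i^{a,b;[a:b]}(f), Inf_j^{c,d;[c:d]}(f) ≥ 2ε/(nq⁷)`. -/
theorem large_refined_boundaries (n q : ℕ) (hq : 3 ≤ q) (f : Profile n q → Fin q) (ε : ℝ)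
    (hdist : ∀ g : Profile n q → Fin q,
      IsDictator g ∨ TakesAtMostTwoValues g → distF f g ≥ ε) :
    prob (fun x : Profile n q => IsRManip f 2 x) ≥ 4 * ε / ((n : ℝ) * (q : ℝ) ^ 7) ∨
    ∃ (i j : Fin n) (a b c d : Fin q), i ≠ j ∧ a ≠ b ∧ c ≠ d ∧ c ≠ a ∧ c ≠ b ∧
      infABadj f i a b ≥ 2 * ε / ((n : ℝ) * (q : ℝ) ^ 7) ∧
      infABadj f j c d ≥ 2 * ε / ((n : ℝ) * (q : ℝ) ^ 7) := by
  by_contra! hcon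
  obtain ⟨hM, hcross⟩ := hcon
  have hM0 := prob_nonneg (IsRManip f 2)
  have hn : 0 < n := Nat.pos_of_ne_zero fun hn => by simp [hn] at hM; linarith
  have hε : 0 < ε := by
    by_contra! hε
    linarith [div_nonpos_of_nonpos_of_nonneg (by linarith : 4 * ε ≤ 0)
      (by positivity : (0 : ℝ) ≤ n * q ^ 7)]
  have htwo : ∀ g, TakesAtMostTwoValues g → ε ≤ distF f g := fun g hg => hdist g (Or.inr hg)
  obtain ⟨a, -, -, ha⟩ := exists_mu_ge hq hε htwo ⟨0, by omega⟩ ⟨0, by omega⟩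
  obtain ⟨b, hba, -, hb⟩ := exists_mu_ge hq hε htwo a a
  obtain ⟨c, hca, hcb, hc⟩ := exists_mu_ge hq hε htwo a b
  have heavy e (he : ε / q ≤ mu f e) := exists_infABadj_ge hq hn hε hM.le he (le_one_sub_mu htwo e)
  obtain ⟨i, a', haa', hia⟩ := heavy a ha
  obtain ⟨j, b', hbb', hjb⟩ := heavy b hb
  obtain ⟨k, c', hcc', hkc⟩ := heavy c hc
  have hH : ∀ i j a b c d, i ≠ j → a ≠ b ∧ 2 * ε / (n * q ^ 7) ≤ infABadj f i a b →
      c ≠ d ∧ 2 * ε / (n * q ^ 7) ≤ infABadj f j c d → c = a ∨ c = b := by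
    rintro i j a b c d hij ⟨hab, hi⟩ ⟨hcd, hj⟩
    by_contra! h
    exact (hcross i j a b c d hij hab hcd h.1 h.2 hi).not_ge hj
  obtain ⟨g, hg, hfg⟩ := exists_dictator_distF_lt hq hε hM.le i fun l hl x y hxy =>
    not_lt.mp fun hlt => not_of_ne_of_noCrossing hH hba.symm hca.symm hcb.symm ⟨haa', hia⟩
      ⟨hbb', hjb⟩ ⟨hcc', hkc⟩ hl x y ⟨hxy, hlt.le⟩
  exact (hdist g (Or.inl hg)).not_gt hfg
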